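/- Let B([0,T]×𝒳) be the Banach space of bounded Borel measurable functions ψ: [0,T]×𝒳 → ℝ with the supremum norm ‖ψ‖ = sup_{(t,x)} |ψ(t,x)|. Fix a policy π ∈ Π, set β = 2λ+1, R(t,x) = Σ_{S∈𝒜(x)} r(S) π(S|t,x) + γ ℋ(π(·|t,x)), and define the operator ℒ on B([0,T]×𝒳) by (ℒψ)(t,x) = e^{βt} ∫_t^T { R(s,x) + Σ_{S∈𝒜(x)} ( Σ_{y∈𝒳} e^{−βs} ψ(s,y) q(y|s,x,S) ) π(S|s,x) } ds. Then ℒ is well-defined and is a contraction on B([0,T]×𝒳): for all ψ₁, ψ₂ ∈ B([0,T]×𝒳), ‖ℒψ₁ − ℒψ₂‖ ≤ (2λ/(2λ+1)) ‖ψ₁ − ψ₂‖. -/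

import Mathlib

/-!
Write `β = 2λ + 1`. The integrand of `ℒψ` splits into the reward rate `R(s,x)`, which is
continuous in `s` and hence bounded on `[0,T] × 𝒳`, and the jump term
`e^{-βs} ∑_S π(S|s,x) ∑_y ψ(s,y) q(y|s,x,S)`, which is linear in `ψ`. Every row of the rate
matrix has absolute sum at most `2λ` and `π(·|s,x)` is a sub-probability on `𝒜(x)`, so the jump
term of `ψ₁ - ψ₂` is bounded by `e^{-βs} 2λ ‖ψ₁ - ψ₂‖`; finally `e^{βt} ∫_t^T e^{-βs} ds ≤ 1/β`.
-/

open MeasureTheory intervalIntegral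

namespace RLNRM

/-- Primitives of the choice-based network revenue management model:
`m` resources with initial inventory `c`, `n` products with prices `p`,
consumption matrix `A`, Poisson arrival rate `lam` on the horizon `[0,T]`,
MNL-type choice probabilities `P j S` (buy `j` when offered `S`) and `P0 S`
(no purchase), and entropy temperature `gamma`. -/
structure NRM (m n : ℕ) where
  c : Fin m → ℕ
  A : Fin m → Fin n → ℕ
  p : Fin n → ℝ
  lam : ℝ
  lam_pos : 0 < lam
  T : ℝ
  T_pos : 0 < T
  gamma : ℝ
  gamma_nonneg : 0 ≤ gamma
  P : Finset (Fin n) → Fin n → ℝ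
  P0 : Finset (Fin n) → ℝ
  P_nonneg : ∀ S j, 0 ≤ P S j
  P0_nonneg : ∀ S, 0 ≤ P0 S
  P_sum_one : ∀ S, P0 S + ∑ j ∈ S, P S j = 1
  P_not_mem : ∀ S j, j ∉ S → P S j = 0

variable {m n : ℕ}

/-- The `j`-th column of the consumption matrix, as an integer vector. -/
def NRM.col (M : NRM m n) (j : Fin n) : Fin m → ℤ := fun i => (M.A i j : ℤ)

/-- The initial inventory as an integer vector. -/
def NRM.cZ (M : NRM m n) : Fin m → ℤ := fun i => (M.c i : ℤ)

/-- The state space `𝒳 = {0,…,c 1} × ⋯ × {0,…,c m}`. -/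
noncomputable def NRM.States (M : NRM m n) : Finset (Fin m → ℤ) :=
  Fintype.piFinset fun i => Finset.Icc 0 (M.c i : ℤ)

/-- The feasible assortments `𝒜(x)` at state `x`. -/
def NRM.feas (M : NRM m n) (x : Fin m → ℤ) : Finset (Finset (Fin n)) :=
  Finset.univ.filter fun S => ∀ j ∈ S, ∀ i, (M.A i j : ℤ) ≤ x i

/-- The controlled transition rates `q(y | t, x, S)`. -/
noncomputable def NRM.q (M : NRM m n) (_t : ℝ) (x : Fin m → ℤ) (S : Finset (Fin n))
    (y : Fin m → ℤ) : ℝ :=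
  if y = x then -(M.lam * (1 - M.P0 S))
  else ∑ j ∈ Finset.univ.filter (fun j : Fin n => M.col j = x - y), M.lam * M.P S j

/-- The revenue rate `r(S) = λ ∑ j, p j * P j S`. -/
noncomputable def NRM.r (M : NRM m n) (S : Finset (Fin n)) : ℝ :=
  M.lam * ∑ j, M.p j * M.P S j

/-- The Hamiltonian `H(t, x, S, v) = r S + ∑_{y ∈ 𝒳} v t y * q (y | t, x, S)`. -/
noncomputable def NRM.H (M : NRM m n) (t : ℝ) (x : Fin m → ℤ) (S : Finset (Fin n))
    (v : ℝ → (Fin m → ℤ) → ℝ) : ℝ :=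
  M.r S + ∑ y ∈ M.States, v t y * M.q t x S y

/-- An admissible randomized Markov policy. -/
structure Policy (M : NRM m n) where
  π : ℝ → (Fin m → ℤ) → Finset (Fin n) → ℝ
  measurable_t : ∀ x S, Measurable fun t => π t x S
  nonneg : ∀ t x S, 0 ≤ π t x S
  sum_one : ∀ t x, ∑ S : Finset (Fin n), π t x S = 1
  supported : ∀ t x S, S ∉ M.feas x → π t x S = 0
  continuous_t : ∀ x S, Continuous fun t => π t x S

/-- The entropy `ℋ(π(·|t,x)) = -∑_{S ∈ 𝒜(x)} π(S|t,x) log π(S|t,x)`. -/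
noncomputable def NRM.ent (M : NRM m n) (pol : Policy M) (t : ℝ) (x : Fin m → ℤ) : ℝ :=
  -∑ S ∈ M.feas x, pol.π t x S * Real.log (pol.π t x S)

/-- `v ∈ C^{1,0}([0,T] × 𝒳)`: continuously differentiable in `t` for each state `x`. -/
def NRM.C10 (M : NRM m n) (v : ℝ → (Fin m → ℤ) → ℝ) : Prop :=
  ∀ x ∈ M.States, ContDiffOn ℝ 1 (fun t => v t x) (Set.Icc 0 M.T)

/-- The time derivative `∂v/∂t (t,x)` (within the horizon `[0,T]`). -/
noncomputable def NRM.dvt (M : NRM m n) (v : ℝ → (Fin m → ℤ) → ℝ) (t : ℝ)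
    (x : Fin m → ℤ) : ℝ :=
  derivWithin (fun s => v s x) (Set.Icc 0 M.T) t

/-- Right-continuous state path built from the jump data of a trajectory:
`x0` initial state, `L` jumps at times `τ k` selling products `prd k`. -/
noncomputable def pathX (M : NRM m n) (x0 : Fin m → ℤ) (L : ℕ) (τ : ℕ → ℝ)
    (prd : ℕ → Fin n) (t : ℝ) : Fin m → ℤ :=
  x0 - ∑ k ∈ (Finset.range L).filter (fun k => τ k ≤ t), M.col (prd k)

/-- Left limit `X_{t-}` of the state path. -/
noncomputable def pathXleft (M : NRM m n) (x0 : Fin m → ℤ) (L : ℕ) (τ : ℕ → ℝ)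
    (prd : ℕ → Fin n) (t : ℝ) : Fin m → ℤ :=
  x0 - ∑ k ∈ (Finset.range L).filter (fun k => τ k < t), M.col (prd k)

/-- A probabilistic model of the controlled sales process under policy `pol`:
`law t x` is the law of the trajectory conditional on `X_t = x` (Markov family);
a trajectory is described by its `L` sale events, with jump times `τ`, sold
products `prd`, and offered assortments `act`.  The fields record that jumps lie
in `(t, T]`, are ordered, keep the state in `𝒳`, that the sold product belongs to
the offered assortment, and that sales of product `j` have intensity
`λ ∑_{S ∈ 𝒜(X_{s-})} P j S * π(S | s, X_{s-})`. -/
structure SampleModel (M : NRM m n) (pol : Policy M) (Ω : Type*)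
    [MeasurableSpace Ω] where
  law : ℝ → (Fin m → ℤ) → Measure Ω
  law_prob : ∀ t x, IsProbabilityMeasure (law t x)
  L : Ω → ℕ
  τ : Ω → ℕ → ℝ
  prd : Ω → ℕ → Fin n
  act : Ω → ℕ → Finset (Fin n)
  meas_L : Measurable L
  meas_τ : ∀ k, Measurable fun ω => τ ω k
  meas_prd : ∀ k, Measurable fun ω => prd ω k
  jumps_mem : ∀ t x, ∀ᵐ ω ∂law t x, ∀ k < L ω, t < τ ω k ∧ τ ω k ≤ M.T
  jumps_mono : ∀ t x, ∀ᵐ ω ∂law t x, ∀ k l, k < l → l < L ω → τ ω k < τ ω l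
  states_mem : ∀ t x, x ∈ M.States →
    ∀ᵐ ω ∂law t x, ∀ s : ℝ, pathX M x (L ω) (τ ω) (prd ω) s ∈ M.States
  sold_in_act : ∀ t x, ∀ᵐ ω ∂law t x, ∀ k < L ω, prd ω k ∈ act ω k
  intensity : ∀ t x, x ∈ M.States → 0 ≤ t → ∀ (j : Fin n) (u : ℝ), t ≤ u → u ≤ M.T →
    (∫ ω, ((((Finset.range (L ω)).filter fun k => τ ω k ≤ u ∧ prd ω k = j).card : ℝ))
        ∂law t x)
      = ∫ ω, (∫ s in t..u, M.lam *
          ∑ S ∈ M.feas (pathXleft M x (L ω) (τ ω) (prd ω) s),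
            M.P S j * pol.π s (pathXleft M x (L ω) (τ ω) (prd ω) s) S) ∂law t x

variable {M : NRM m n} {pol : Policy M} {Ω : Type*} [MeasurableSpace Ω]

/-- The pathwise reward-plus-entropy-bonus collected on `(t, T]` by a trajectory
started at `(t, x)`: `∫_{(t,T]} p^⊤ dN_s + γ ∫_t^T ℋ(π(·|s, X_{s-})) ds`. -/
noncomputable def SampleModel.rew (V : SampleModel M pol Ω) (t : ℝ) (x : Fin m → ℤ)
    (ω : Ω) : ℝ :=
  (∑ k ∈ Finset.range (V.L ω), if t < V.τ ω k ∧ V.τ ω k ≤ M.T then M.p (V.prd ω k) else 0)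
    + M.gamma * ∫ s in t..M.T, M.ent pol s (pathXleft M x (V.L ω) (V.τ ω) (V.prd ω) s)

/-- The entropy-regularized value function
`J(t,x;π) = E[∫_{(t,T]} p^⊤ dN_s + γ ∫_t^T ℋ(π(·|s, X_{s-})) ds | X_t = x]`. -/
noncomputable def SampleModel.J (V : SampleModel M pol Ω) (t : ℝ) (x : Fin m → ℤ) : ℝ :=
  ∫ ω, V.rew t x ω ∂V.law t x

end RLNRM

namespace RLNRM

/-- The operator `ℒ` on `B([0,T] × 𝒳)`:
`(ℒψ)(t,x) = e^{βt} ∫_t^T { R(s,x) + ∑_{S ∈ 𝒜(x)} (∑_{y ∈ 𝒳} e^{-βs} ψ(s,y) q(y|s,x,S)) π(S|s,x) } ds`,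
with `β = 2λ + 1` and `R(s,x) = ∑_{S ∈ 𝒜(x)} r(S) π(S|s,x) + γ ℋ(π(·|s,x))`. -/
noncomputable def NRM.Lop {m n : ℕ} (M : NRM m n) (pol : Policy M)
    (ψ : ℝ → (Fin m → ℤ) → ℝ) (t : ℝ) (x : Fin m → ℤ) : ℝ :=
  Real.exp ((2 * M.lam + 1) * t) *
    ∫ s in t..M.T,
      ((∑ S ∈ M.feas x, M.r S * pol.π s x S) + M.gamma * M.ent pol s x
        + ∑ S ∈ M.feas x,
            (∑ y ∈ M.States, Real.exp (-((2 * M.lam + 1) * s)) * ψ s y * M.q s x S y)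
              * pol.π s x S)

end RLNRM

section

variable {E : Type*} [NormedAddCommGroup E] [NormedSpace ℝ E] {μ : Measure ℝ} [SFinite μ]

theorem MeasureTheory.StronglyMeasurable.intervalIntegral_lower {f : ℝ → E}
    (hf : StronglyMeasurable f) (b : ℝ) : StronglyMeasurable fun a => ∫ s in a..b, f s ∂μ := by
  have slice : ∀ s : Set (ℝ × ℝ), MeasurableSet s →
      StronglyMeasurable fun a => ∫ u, s.indicator (fun p => f p.2) (a, u) ∂μ :=
    fun s hs => ((hf.comp_measurable measurable_snd).indicator hs).integral_prod_right'
  convert (slice {p | p.1 < p.2 ∧ p.2 ≤ b}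
    ((_root_.measurableSet_lt measurable_fst measurable_snd).inter
      (_root_.measurableSet_le measurable_snd measurable_const))).sub
    (slice {p | b < p.2 ∧ p.2 ≤ p.1}
      ((_root_.measurableSet_lt measurable_const measurable_snd).inter
        (_root_.measurableSet_le measurable_snd measurable_fst))) using 1
  funext a
  simp only [intervalIntegral, ← integral_indicator measurableSet_Ioc]
  rfl

end

theorem abs_sum_mul_le_mul_sum_abs {ι : Type*} (s : Finset ι) {f g : ι → ℝ} {C : ℝ}
    (hf : ∀ i ∈ s, |f i| ≤ C) : |∑ i ∈ s, f i * g i| ≤ C * ∑ i ∈ s, |g i| := by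
  rw [Finset.mul_sum]
  refine (Finset.abs_sum_le_sum_abs _ _).trans (Finset.sum_le_sum fun i hi => ?_)
  rw [abs_mul]
  exact mul_le_mul_of_nonneg_right (hf i hi) (abs_nonneg _)

theorem integral_exp_neg_mul {b : ℝ} (hb : b ≠ 0) (t T : ℝ) :
    ∫ s in t..T, Real.exp (-(b * s)) = (Real.exp (-(b * t)) - Real.exp (-(b * T))) / b := by
  have h := intervalIntegral.integral_comp_mul_left (a := t) (b := T) Real.exp (neg_ne_zero.mpr hb)
  simp only [integral_exp, smul_eq_mul, neg_mul] at h
  rw [h, inv_neg]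
  ring

theorem exp_mul_integral_exp_neg_mul_le {b : ℝ} (hb : 0 < b) (t T : ℝ) :
    Real.exp (b * t) * ∫ s in t..T, Real.exp (-(b * s)) ≤ 1 / b := by
  rw [integral_exp_neg_mul hb.ne', mul_div_assoc', mul_sub, ← Real.exp_add, ← Real.exp_add,
    add_neg_cancel, Real.exp_zero]
  gcongr
  exact sub_le_self _ (Real.exp_pos _).le

namespace RLNRM

variable {m n : ℕ}

theorem Policy.sum_feas_le_one {M : NRM m n} (pol : Policy M) (t : ℝ) (x : Fin m → ℤ) :
    ∑ S ∈ M.feas x, pol.π t x S ≤ 1 :=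
  (Finset.sum_le_sum_of_subset_of_nonneg (Finset.subset_univ _)
    fun S _ _ => pol.nonneg t x S).trans_eq (pol.sum_one t x)

theorem NRM.sum_P (M : NRM m n) (S : Finset (Fin n)) : ∑ j, M.P S j = 1 - M.P0 S := by
  rw [← Finset.sum_subset (Finset.subset_univ S) fun j _ hj => M.P_not_mem S j hj]
  linarith [M.P_sum_one S]

theorem NRM.sum_abs_q_le (M : NRM m n) (t : ℝ) {x : Fin m → ℤ} (hx : x ∈ M.States)
    (S : Finset (Fin n)) : ∑ y ∈ M.States, |M.q t x S y| ≤ 2 * M.lam := by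
  have hpurchase : 0 ≤ M.lam * (1 - M.P0 S) :=
    M.sum_P S ▸ mul_nonneg M.lam_pos.le (Finset.sum_nonneg fun j _ => M.P_nonneg S j)
  have hdiag : |M.q t x S x| = M.lam * (1 - M.P0 S) := by
    rw [NRM.q, if_pos rfl, abs_neg, abs_of_nonneg hpurchase]
  -- the off-diagonal rates are the purchase rates grouped by the state `x - A^j` they lead to
  have hoff : ∑ y ∈ M.States.erase x, |M.q t x S y| ≤ M.lam * (1 - M.P0 S) := by
    calc ∑ y ∈ M.States.erase x, |M.q t x S y|
        = ∑ y ∈ M.States.erase x, ∑ j with x - M.col j = y, M.lam * M.P S j := by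
          refine Finset.sum_congr rfl fun y hy => ?_
          rw [NRM.q, if_neg (Finset.ne_of_mem_erase hy), abs_of_nonneg
            (Finset.sum_nonneg fun j _ => mul_nonneg M.lam_pos.le (M.P_nonneg S j))]
          exact Finset.sum_congr (Finset.filter_congr fun j _ => by
            rw [sub_eq_iff_eq_add, eq_sub_iff_add_eq, add_comm, eq_comm]) fun _ _ => rfl
      _ = ∑ j with x - M.col j ∈ M.States.erase x, M.lam * M.P S j :=
          Finset.sum_fiberwise_eq_sum_filter _ _ _ _
      _ ≤ ∑ j, M.lam * M.P S j :=
          Finset.sum_le_sum_of_subset_of_nonneg (Finset.filter_subset _ _)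
            fun j _ _ => mul_nonneg M.lam_pos.le (M.P_nonneg S j)
      _ = M.lam * (1 - M.P0 S) := by rw [← Finset.mul_sum, M.sum_P]
  rw [← Finset.sum_erase_add _ _ hx, hdiag]
  linarith [mul_nonneg M.lam_pos.le (M.P0_nonneg S)]

noncomputable def NRM.runningReward (M : NRM m n) (pol : Policy M) (s : ℝ) (x : Fin m → ℤ) : ℝ :=
  (∑ S ∈ M.feas x, M.r S * pol.π s x S) + M.gamma * M.ent pol s x

noncomputable def NRM.jumpTerm (M : NRM m n) (pol : Policy M) (ψ : ℝ → (Fin m → ℤ) → ℝ)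
    (s : ℝ) (x : Fin m → ℤ) : ℝ :=
  ∑ S ∈ M.feas x,
    (∑ y ∈ M.States, Real.exp (-((2 * M.lam + 1) * s)) * ψ s y * M.q s x S y) * pol.π s x S

variable (M : NRM m n) (pol : Policy M)

theorem NRM.Lop_eq (ψ : ℝ → (Fin m → ℤ) → ℝ) (t : ℝ) (x : Fin m → ℤ) :
    M.Lop pol ψ t x = Real.exp ((2 * M.lam + 1) * t) *
      ∫ s in t..M.T, (M.runningReward pol s x + M.jumpTerm pol ψ s x) :=
  rfl

theorem NRM.continuous_runningReward (x : Fin m → ℤ) :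
    Continuous fun s => M.runningReward pol s x := by
  unfold NRM.runningReward NRM.ent
  have := pol.continuous_t x
  fun_prop

theorem NRM.exists_abs_runningReward_le :
    ∃ K, ∀ s ∈ Set.Icc 0 M.T, ∀ x ∈ M.States, |M.runningReward pol s x| ≤ K := by
  -- view the reward at time `s` as a vector indexed by the finite state space
  have hcont : Continuous fun s (x : M.States) => M.runningReward pol s x :=
    continuous_pi fun x => M.continuous_runningReward pol x
  obtain ⟨K, hK⟩ := isCompact_Icc.exists_bound_of_continuousOn hcont.continuousOn
  exact ⟨K, fun s hs x hx => (norm_le_pi_norm (fun x : M.States => M.runningReward pol s x)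
    ⟨x, hx⟩).trans (hK s hs)⟩

theorem NRM.jumpTerm_sub (ψ₁ ψ₂ : ℝ → (Fin m → ℤ) → ℝ) (s : ℝ) (x : Fin m → ℤ) :
    M.jumpTerm pol ψ₁ s x - M.jumpTerm pol ψ₂ s x = M.jumpTerm pol (ψ₁ - ψ₂) s x := by
  simp only [NRM.jumpTerm, Pi.sub_apply, mul_sub, sub_mul, Finset.sum_sub_distrib]

theorem NRM.abs_jumpTerm_le {φ : ℝ → (Fin m → ℤ) → ℝ} {C s : ℝ} {x : Fin m → ℤ}
    (hx : x ∈ M.States) (hφ : ∀ y ∈ M.States, |φ s y| ≤ C) :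
    |M.jumpTerm pol φ s x| ≤ Real.exp (-((2 * M.lam + 1) * s)) * (2 * M.lam * C) := by
  have hC : 0 ≤ C := (abs_nonneg _).trans (hφ x hx)
  have hrow : ∀ S ∈ M.feas x,
      |∑ y ∈ M.States, Real.exp (-((2 * M.lam + 1) * s)) * φ s y * M.q s x S y|
        ≤ Real.exp (-((2 * M.lam + 1) * s)) * (2 * M.lam * C) := fun S _ => by
    refine (abs_sum_mul_le_mul_sum_abs (C := Real.exp (-((2 * M.lam + 1) * s)) * C) _
      fun y hy => ?_).trans ?_
    · exact (abs_mul _ _).trans_le <| by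
        rw [abs_of_pos (Real.exp_pos _)]; exact mul_le_mul_of_nonneg_left (hφ y hy) (by positivity)
    · exact (mul_le_mul_of_nonneg_left (M.sum_abs_q_le s hx S) (by positivity)).trans_eq
        (by ring)
  calc |M.jumpTerm pol φ s x|
      ≤ Real.exp (-((2 * M.lam + 1) * s)) * (2 * M.lam * C) * ∑ S ∈ M.feas x, |pol.π s x S| :=
        abs_sum_mul_le_mul_sum_abs _ hrow
    _ ≤ Real.exp (-((2 * M.lam + 1) * s)) * (2 * M.lam * C) * 1 := by
        simp only [abs_of_nonneg (pol.nonneg _ _ _)]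
        gcongr
        · have := M.lam_pos; positivity
        · exact pol.sum_feas_le_one s x
    _ = _ := mul_one _

theorem NRM.measurable_integrand {ψ : ℝ → (Fin m → ℤ) → ℝ}
    (hψ : ∀ y, Measurable fun t => ψ t y) (x : Fin m → ℤ) :
    Measurable fun s => M.runningReward pol s x + M.jumpTerm pol ψ s x := by
  refine (M.continuous_runningReward pol x).measurable.add ?_
  unfold NRM.jumpTerm
  have hπ := pol.measurable_t x
  have hq : ∀ S y, Measurable fun s => M.q s x S y := fun _ _ => measurable_const
  fun_prop

theorem NRM.measurable_Lop {ψ : ℝ → (Fin m → ℤ) → ℝ} (hψ : ∀ y, Measurable fun t => ψ t y)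
    (x : Fin m → ℤ) : Measurable fun t => M.Lop pol ψ t x := by
  simp only [NRM.Lop_eq]
  exact (by fun_prop : Measurable fun t => Real.exp ((2 * M.lam + 1) * t)).mul
    ((M.measurable_integrand pol hψ x).stronglyMeasurable.intervalIntegral_lower M.T).measurable

theorem NRM.exists_abs_integrand_le {ψ : ℝ → (Fin m → ℤ) → ℝ} {C : ℝ}
    (hψ : ∀ s ∈ Set.Icc 0 M.T, ∀ y ∈ M.States, |ψ s y| ≤ C) :
    ∃ K, ∀ s ∈ Set.Icc 0 M.T, ∀ x ∈ M.States,
      |M.runningReward pol s x + M.jumpTerm pol ψ s x| ≤ K := by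
  obtain ⟨K, hK⟩ := M.exists_abs_runningReward_le pol
  refine ⟨K + 2 * M.lam * C, fun s hs x hx =>
    (abs_add_le _ _).trans (add_le_add (hK s hs x hx) ?_)⟩
  have hC : 0 ≤ C := (abs_nonneg _).trans (hψ s hs x hx)
  have hdecay : Real.exp (-((2 * M.lam + 1) * s)) ≤ 1 :=
    Real.exp_le_one_iff.mpr (neg_nonpos.mpr (mul_nonneg (by linarith [M.lam_pos]) hs.1))
  calc |M.jumpTerm pol ψ s x| ≤ Real.exp (-((2 * M.lam + 1) * s)) * (2 * M.lam * C) :=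
        M.abs_jumpTerm_le pol hx (hψ s hs)
    _ ≤ 2 * M.lam * C := mul_le_of_le_one_left (by have := M.lam_pos; positivity) hdecay

theorem NRM.intervalIntegrable_integrand {ψ : ℝ → (Fin m → ℤ) → ℝ} {C : ℝ}
    (hψm : ∀ y, Measurable fun t => ψ t y)
    (hψb : ∀ s ∈ Set.Icc 0 M.T, ∀ y ∈ M.States, |ψ s y| ≤ C)
    {t : ℝ} (ht : t ∈ Set.Icc 0 M.T) {x : Fin m → ℤ} (hx : x ∈ M.States) :
    IntervalIntegrable (fun s => M.runningReward pol s x + M.jumpTerm pol ψ s x) volume t M.T := by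
  obtain ⟨K, hK⟩ := M.exists_abs_integrand_le pol hψb
  rw [intervalIntegrable_iff_integrableOn_Ioc_of_le ht.2]
  exact IntegrableOn.of_bound measure_Ioc_lt_top
    (M.measurable_integrand pol hψm x).aestronglyMeasurable K
    (ae_restrict_of_forall_mem measurableSet_Ioc fun s hs =>
      hK s ⟨ht.1.trans hs.1.le, hs.2⟩ x hx)

theorem NRM.abs_Lop_le {ψ : ℝ → (Fin m → ℤ) → ℝ} {K : ℝ}
    (hK : ∀ s ∈ Set.Icc 0 M.T, ∀ x ∈ M.States,
      |M.runningReward pol s x + M.jumpTerm pol ψ s x| ≤ K)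
    {t : ℝ} (ht : t ∈ Set.Icc 0 M.T) {x : Fin m → ℤ} (hx : x ∈ M.States) :
    |M.Lop pol ψ t x| ≤ Real.exp ((2 * M.lam + 1) * M.T) * (K * M.T) := by
  have hK0 : 0 ≤ K := (abs_nonneg _).trans (hK t ht x hx)
  have hint : |∫ s in t..M.T, (M.runningReward pol s x + M.jumpTerm pol ψ s x)| ≤ K * M.T := by
    refine (Real.norm_eq_abs _).symm.trans_le <|
      (intervalIntegral.norm_integral_le_of_norm_le_const (C := K) fun s hs => ?_).trans ?_
    · rw [Set.uIoc_of_le ht.2] at hs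
      exact hK s ⟨ht.1.trans hs.1.le, hs.2⟩ x hx
    · rw [abs_of_nonneg (sub_nonneg.mpr ht.2)]
      exact mul_le_mul_of_nonneg_left (sub_le_self _ ht.1) hK0
  rw [M.Lop_eq, abs_mul, abs_of_pos (Real.exp_pos _)]
  gcongr
  · linarith [M.lam_pos]
  · exact ht.2

theorem NRM.Lop_sub_Lop {ψ₁ ψ₂ : ℝ → (Fin m → ℤ) → ℝ} {t : ℝ} {x : Fin m → ℤ}
    (h₁ : IntervalIntegrable (fun s => M.runningReward pol s x + M.jumpTerm pol ψ₁ s x)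
      volume t M.T)
    (h₂ : IntervalIntegrable (fun s => M.runningReward pol s x + M.jumpTerm pol ψ₂ s x)
      volume t M.T) :
    M.Lop pol ψ₁ t x - M.Lop pol ψ₂ t x =
      Real.exp ((2 * M.lam + 1) * t) * ∫ s in t..M.T, M.jumpTerm pol (ψ₁ - ψ₂) s x := by
  rw [M.Lop_eq, M.Lop_eq, ← mul_sub, ← integral_sub h₁ h₂]
  congr 1
  refine integral_congr fun s _ => ?_
  simp only [← M.jumpTerm_sub]
  ring

theorem NRM.abs_exp_mul_integral_jumpTerm_le {φ : ℝ → (Fin m → ℤ) → ℝ} {C : ℝ}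
    (hφ : ∀ s ∈ Set.Icc 0 M.T, ∀ y ∈ M.States, |φ s y| ≤ C)
    {t : ℝ} (ht : t ∈ Set.Icc 0 M.T) {x : Fin m → ℤ} (hx : x ∈ M.States) :
    |Real.exp ((2 * M.lam + 1) * t) * ∫ s in t..M.T, M.jumpTerm pol φ s x|
      ≤ (2 * M.lam / (2 * M.lam + 1)) * C := by
  have hβ : 0 < 2 * M.lam + 1 := by linarith [M.lam_pos]
  have hC : 0 ≤ 2 * M.lam * C :=
    mul_nonneg (by linarith [M.lam_pos]) ((abs_nonneg _).trans (hφ t ht x hx))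
  have hint : |∫ s in t..M.T, M.jumpTerm pol φ s x|
      ≤ ∫ s in t..M.T, Real.exp (-((2 * M.lam + 1) * s)) * (2 * M.lam * C) :=
    (Real.norm_eq_abs _).symm.trans_le <| intervalIntegral.norm_integral_le_of_norm_le ht.2
      (ae_of_all _ fun s hs => M.abs_jumpTerm_le pol hx (hφ s ⟨ht.1.trans hs.1.le, hs.2⟩))
      ((by fun_prop : Continuous fun s => Real.exp (-((2 * M.lam + 1) * s)) * (2 * M.lam * C)
        ).intervalIntegrable _ _)
  rw [abs_mul, abs_of_pos (Real.exp_pos _)]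
  calc Real.exp ((2 * M.lam + 1) * t) * |∫ s in t..M.T, M.jumpTerm pol φ s x|
      ≤ Real.exp ((2 * M.lam + 1) * t) *
          ∫ s in t..M.T, Real.exp (-((2 * M.lam + 1) * s)) * (2 * M.lam * C) := by gcongr
    _ = 2 * M.lam * C *
          (Real.exp ((2 * M.lam + 1) * t) * ∫ s in t..M.T, Real.exp (-((2 * M.lam + 1) * s))) := by
        rw [intervalIntegral.integral_mul_const]; ring
    _ ≤ 2 * M.lam * C * (1 / (2 * M.lam + 1)) := by
        gcongr; exact exp_mul_integral_exp_neg_mul_le hβ t M.T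
    _ = (2 * M.lam / (2 * M.lam + 1)) * C := by ring

theorem Lop_contraction_general {m n : ℕ} (M : NRM m n) (pol : Policy M)
    (ψ₁ ψ₂ : ℝ → (Fin m → ℤ) → ℝ)
    (hψ₁m : ∀ x, Measurable fun t => ψ₁ t x)
    (hψ₂m : ∀ x, Measurable fun t => ψ₂ t x)
    (hψ₁b : ∃ C₁, ∀ t ∈ Set.Icc (0:ℝ) M.T, ∀ x ∈ M.States, |ψ₁ t x| ≤ C₁) :
    ((∀ x, Measurable fun t => M.Lop pol ψ₁ t x) ∧
      ∃ C₀, ∀ t ∈ Set.Icc (0:ℝ) M.T, ∀ x ∈ M.States, |M.Lop pol ψ₁ t x| ≤ C₀) ∧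
    ∀ C : ℝ, (∀ t ∈ Set.Icc (0:ℝ) M.T, ∀ x ∈ M.States, |ψ₁ t x - ψ₂ t x| ≤ C) →
      ∀ t ∈ Set.Icc (0:ℝ) M.T, ∀ x ∈ M.States,
        |M.Lop pol ψ₁ t x - M.Lop pol ψ₂ t x| ≤ (2 * M.lam / (2 * M.lam + 1)) * C := by
  obtain ⟨C₁, hC₁⟩ := hψ₁b
  obtain ⟨K, hK⟩ := M.exists_abs_integrand_le pol hC₁
  refine ⟨⟨M.measurable_Lop pol hψ₁m, Real.exp ((2 * M.lam + 1) * M.T) * (K * M.T),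
    fun t ht x hx => M.abs_Lop_le pol hK ht hx⟩, fun C hC t ht x hx => ?_⟩
  have hψ₂b : ∀ s ∈ Set.Icc 0 M.T, ∀ y ∈ M.States, |ψ₂ s y| ≤ C₁ + C := fun s hs y hy => by
    linarith [abs_sub_abs_le_abs_sub (ψ₂ s y) (ψ₁ s y), abs_sub_comm (ψ₂ s y) (ψ₁ s y),
      hC₁ s hs y hy, hC s hs y hy]
  rw [M.Lop_sub_Lop pol (M.intervalIntegrable_integrand pol hψ₁m hC₁ ht hx)
    (M.intervalIntegrable_integrand pol hψ₂m hψ₂b ht hx)]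
  exact M.abs_exp_mul_integral_jumpTerm_le pol hC ht hx

/-- The operator `ℒ` is well defined on the space `B([0,T] × 𝒳)` of bounded Borel
measurable functions and is a contraction for the supremum norm, with contraction
constant `2λ/(2λ+1)`: whenever `C` bounds `|ψ₁ - ψ₂|` on `[0,T] × 𝒳`, the value
`(2λ/(2λ+1)) C` bounds `|ℒψ₁ - ℒψ₂|` on `[0,T] × 𝒳`. -/
theorem Lop_contraction {m n : ℕ} (M : NRM m n) (pol : Policy M)
    (ψ₁ ψ₂ : ℝ → (Fin m → ℤ) → ℝ)
    (hψ₁m : ∀ x, Measurable fun t => ψ₁ t x)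
    (hψ₂m : ∀ x, Measurable fun t => ψ₂ t x)
    (hψ₁b : ∃ C₁, ∀ t ∈ Set.Icc (0:ℝ) M.T, ∀ x ∈ M.States, |ψ₁ t x| ≤ C₁)
    (hψ₂b : ∃ C₂, ∀ t ∈ Set.Icc (0:ℝ) M.T, ∀ x ∈ M.States, |ψ₂ t x| ≤ C₂) :
    ((∀ x, Measurable fun t => M.Lop pol ψ₁ t x) ∧
      ∃ C₀, ∀ t ∈ Set.Icc (0:ℝ) M.T, ∀ x ∈ M.States, |M.Lop pol ψ₁ t x| ≤ C₀) ∧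
    ∀ C : ℝ, (∀ t ∈ Set.Icc (0:ℝ) M.T, ∀ x ∈ M.States, |ψ₁ t x - ψ₂ t x| ≤ C) →
      ∀ t ∈ Set.Icc (0:ℝ) M.T, ∀ x ∈ M.States,
        |M.Lop pol ψ₁ t x - M.Lop pol ψ₂ t x| ≤ (2 * M.lam / (2 * M.lam + 1)) * C :=
  Lop_contraction_general M pol ψ₁ ψ₂ hψ₁m hψ₂m hψ₁b
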